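/- arXiv:2507.22536 — 6 statements merged into one kernel-verified Lean document; each statement's English description precedes it below -/
import Mathlib

section
/- For a monad (T,μ,η) and an endofunctor F on a category C, Kleisli liftings of F to the Kleisli category Kl(T) (endofunctors F̄ on Kl(T) with F̄ ∘ K = K ∘ F, where K : C → Kl(T) is the canonical inclusion) are in bijective correspondence with distributive laws λ : F∘T ⟶ T∘F of the monad T over F (natural transformations compatible with μ and η). -/
open CategoryTheory

universe v u

/-- A law distributing a monad `(T,μ,η)` over an endofunctor `F`: a natural
transformation `λ : F∘T ⟶ T∘F` (componentwise `F (T X) ⟶ T (F X)`) compatible with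
the multiplication and the unit of the monad. -/
structure DistLaw {C : Type u} [Category.{v} C] (T : Monad C) (F : C ⥤ C) where
  nat : T.toFunctor ⋙ F ⟶ F ⋙ T.toFunctor
  mu_compat : ∀ X : C, F.map (T.μ.app X) ≫ nat.app X =
      nat.app (T.obj X) ≫ T.map (nat.app X) ≫ T.μ.app (F.obj X)
  eta_compat : ∀ X : C, F.map (T.η.app X) ≫ nat.app X = T.η.app (F.obj X)

/-!
A lifting `G` of `F` to `Kl(T)` is determined by its action on Kleisli morphisms
`f : X ⟶ T Y`, which must respect Kleisli composition and send `K f` to `K (F f)`.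
Since every such `f` factors as `K f` followed by the counit `T Y ⟶ Y` of the Kleisli
adjunction (the Kleisli morphism given by `𝟙 (T Y)`), we get `G f = F f ≫ λ_Y` with
`λ_Y := G 𝟙_{T Y}`, and functoriality of this formula amounts exactly to
naturality of `λ` together with its compatibility with `μ` and `η`.
-/

open Kleisli.Adjunction

def CategoryTheory.Functor.withObj {C D : Type*} [Category C] [Category D] (G : C ⥤ D)
    (obj : C → D) (e : ∀ X, G.obj X = obj X) : C ⥤ D where
  obj := obj
  map f := eqToHom (e _).symm ≫ G.map f ≫ eqToHom (e _)

theorem CategoryTheory.Functor.withObj_eq {C D : Type*} [Category C] [Category D] (G : C ⥤ D)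
    (obj : C → D) (e : ∀ X, G.obj X = obj X) : G.withObj obj e = G :=
  Functor.ext (fun X => (e X).symm) fun _ _ _ => by simp [Functor.withObj]

/-- A lifting of `F` to `Kl(T)` that is `F` on objects, recorded by its action on Kleisli
morphisms `X ⟶ T Y`. -/
structure KleisliLift {C : Type u} [Category.{v} C] (T : Monad C) (F : C ⥤ C) where
  map : ∀ {X Y : C}, (X ⟶ T.obj Y) → (F.obj X ⟶ T.obj (F.obj Y))
  map_comp : ∀ {X Y Z : C} (f : X ⟶ T.obj Y) (g : Y ⟶ T.obj Z),
    map (f ≫ T.map g ≫ T.μ.app Z) = map f ≫ T.map (map g) ≫ T.μ.app (F.obj Z)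
  map_pure : ∀ {X Y : C} (f : X ⟶ Y), map (f ≫ T.η.app Y) = F.map f ≫ T.η.app (F.obj Y)

attribute [ext] DistLaw

namespace DistLaw

variable {C : Type u} [Category.{v} C] {T : Monad C} {F : C ⥤ C}

theorem map_kleisli_comp (L : DistLaw T F) {X Y Z : C} (f : X ⟶ T.obj Y) (g : Y ⟶ T.obj Z) :
    F.map (f ≫ T.map g ≫ T.μ.app Z) ≫ L.nat.app Z =
      (F.map f ≫ L.nat.app Y) ≫ T.map (F.map g ≫ L.nat.app Z) ≫ T.μ.app (F.obj Z) := by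
  have hg : F.map (T.map g) ≫ L.nat.app (T.obj Z) = L.nat.app Y ≫ T.map (F.map g) :=
    L.nat.naturality g
  simp only [Functor.map_comp, Category.assoc, L.mu_compat, reassoc_of% hg]

def toKleisliLift (L : DistLaw T F) : KleisliLift T F where
  map f := F.map f ≫ L.nat.app _
  map_comp f g := L.map_kleisli_comp f g
  map_pure {X Y} f := by simp [L.eta_compat Y]

end DistLaw

namespace KleisliLift

variable {C : Type u} [Category.{v} C] {T : Monad C} {F : C ⥤ C}

theorem ext {M N : KleisliLift T F}
    (h : ∀ {X Y : C} (f : X ⟶ T.obj Y), M.map f = N.map f) : M = N := by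
  rcases M with ⟨φ, _, _⟩
  rcases N with ⟨ψ, _, _⟩
  congr
  funext X Y f
  exact h f

theorem map_eq_comp_map_counit (M : KleisliLift T F) {X Y : C} (f : X ⟶ T.obj Y) :
    M.map f = F.map f ≫ M.map (𝟙 (T.obj Y)) := by
  have hf : f = (f ≫ T.η.app (T.obj Y)) ≫ T.map (𝟙 (T.obj Y)) ≫ T.μ.app Y := by simp
  conv_lhs => rw [hf, M.map_comp, M.map_pure]
  simp [← T.η.naturality_assoc]

def toDistLaw (M : KleisliLift T F) : DistLaw T F where
  nat :=
    { app X := M.map (𝟙 (T.obj X))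
      naturality X Y f := by
        have hTf : T.map f = 𝟙 (T.obj X) ≫ T.map (f ≫ T.η.app Y) ≫ T.μ.app Y := by simp
        change F.map (T.map f) ≫ _ = _ ≫ T.map (F.map f)
        rw [← M.map_eq_comp_map_counit, hTf, M.map_comp, M.map_pure]
        simp }
  mu_compat X := by
    have hμ : T.μ.app X = 𝟙 (T.obj (T.obj X)) ≫ T.map (𝟙 (T.obj X)) ≫ T.μ.app X := by simp
    rw [← M.map_eq_comp_map_counit, hμ, M.map_comp]
  eta_compat X := by
    rw [← M.map_eq_comp_map_counit, ← Category.id_comp (T.η.app X), M.map_pure]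
    simp

def equivDistLaw : KleisliLift T F ≃ DistLaw T F where
  toFun := toDistLaw
  invFun := DistLaw.toKleisliLift
  left_inv M := ext fun f => (M.map_eq_comp_map_counit f).symm
  right_inv L := by
    ext X
    simp [toDistLaw, DistLaw.toKleisliLift]

def toFunctor (M : KleisliLift T F) : Kleisli T ⥤ Kleisli T where
  obj X := Kleisli.mk T (F.obj X.of)
  map f := ⟨M.map f.of⟩
  map_id X := Kleisli.hom_ext (by simpa using M.map_pure (𝟙 X.of))
  map_comp f g := Kleisli.hom_ext (M.map_comp f.of g.of)

theorem toKleisli_comp_toFunctor (M : KleisliLift T F) :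
    toKleisli T ⋙ M.toFunctor = F ⋙ toKleisli T :=
  Functor.hext (fun _ => rfl) fun _ _ f => heq_of_eq (Kleisli.hom_ext (M.map_pure f))

section OfLifting

variable (G : Kleisli T ⥤ Kleisli T) (h : toKleisli T ⋙ G = F ⋙ toKleisli T)

/-- `G` with its objects replaced by the equal objects `F X`, so that it sends a Kleisli
morphism `X ⟶ T Y` to one of type `F X ⟶ T (F Y)` on the nose. -/
def strictLift : Kleisli T ⥤ Kleisli T :=
  G.withObj (fun X => Kleisli.mk T (F.obj X.of)) fun X => Functor.congr_obj h X.of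

def ofLifting : KleisliLift T F where
  map {X Y} f := ((strictLift G h).map (⟨f⟩ : Kleisli.mk T X ⟶ Kleisli.mk T Y)).of
  map_comp {X Y Z} f g := by
    have hfg := (strictLift G h).map_comp (⟨f⟩ : Kleisli.mk T X ⟶ Kleisli.mk T Y)
      (⟨g⟩ : Kleisli.mk T Y ⟶ Kleisli.mk T Z)
    exact congrArg Kleisli.Hom.of hfg
  map_pure {X Y} f := by
    have hf := (conj_eqToHom_iff_heq _ _ (Functor.congr_obj h X).symm
      (Functor.congr_obj h Y).symm).mpr (Functor.hcongr_hom h f).symm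
    exact congrArg Kleisli.Hom.of hf.symm

theorem toFunctor_ofLifting : (ofLifting G h).toFunctor = G :=
  (rfl : (ofLifting G h).toFunctor = strictLift G h).trans (G.withObj_eq _ _)

end OfLifting

def equivLiftings :
    KleisliLift T F ≃ {G : Kleisli T ⥤ Kleisli T // toKleisli T ⋙ G = F ⋙ toKleisli T} where
  toFun M := ⟨M.toFunctor, M.toKleisli_comp_toFunctor⟩
  invFun G := ofLifting G.1 G.2
  left_inv M := ext fun {X Y} f => by
    have hf : (strictLift M.toFunctor M.toKleisli_comp_toFunctor).map
        (⟨f⟩ : Kleisli.mk T X ⟶ Kleisli.mk T Y) = M.toFunctor.map ⟨f⟩ :=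
      (Category.id_comp _).trans (Category.comp_id _)
    exact congrArg Kleisli.Hom.of hf
  right_inv G := Subtype.ext (toFunctor_ofLifting G.1 G.2)

end KleisliLift

/-- Kleisli liftings of `F` along the canonical inclusion `K : C ⥤ Kleisli T`
are in bijective correspondence with laws distributing the monad `T` over `F`. -/
theorem kleisli_liftings_equiv_distributive_laws
    {C : Type u} [Category.{v} C] (T : Monad C) (F : C ⥤ C) :
    Nonempty
      ({G : Kleisli T ⥤ Kleisli T //
          Kleisli.Adjunction.toKleisli T ⋙ G = F ⋙ Kleisli.Adjunction.toKleisli T} ≃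
        DistLaw T F) :=
  ⟨KleisliLift.equivLiftings.symm.trans KleisliLift.equivDistLaw⟩
end

section
/- If an endofunctor F on C has a final coalgebra, then the constant sheaf functor Δ : C → Sh_C(α) takes the final F-coalgebra to a final coalgebra for the pointwise extension F^ on Sh_C(α). -/
/-!
A coalgebra for postcomposition with `F` on `J ⥤ C` is a `J`-indexed diagram of
`F`-coalgebras. A morphism from it into the constant diagram on `c` is a family of
coalgebra morphisms into `c`, so finality of `c` determines each component, and
naturality of that family is again forced by uniqueness of maps into `c`.
-/

open CategoryTheory CategoryTheory.Limits

universe w v u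

/-- The successor ordinals `≤ α`: the canonical base for the Alexandrov topology of
the ordinal `α`.  `C`-valued sheaves on the Alexandrov topology of `α` are
equivalently presheaves on this base, and under this presentation the pointwise
extension `F^` of an endofunctor `F` of `C` is postcomposition with `F`. -/
def SuccStage (α : Ordinal.{w}) : Type (w + 1) :=
  {β : Ordinal.{w} // β ≤ α ∧ ∃ γ, β = γ + 1}

instance (α : Ordinal.{w}) : Preorder (SuccStage α) :=
  Subtype.preorder _

namespace CategoryTheory.Endofunctor.Coalgebra

variable {J : Type*} [Category J] {C : Type u} [Category.{v} C] {F : C ⥤ C}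

abbrev const (J : Type*) [Category J] (c : Coalgebra F) :
    Coalgebra ((Functor.whiskeringRight J C C).obj F) :=
  ⟨(Functor.const J).obj c.V, (Functor.const J).map c.str ≫ (Functor.constComp J c.V F).inv⟩

abbrev eval (A : Coalgebra ((Functor.whiskeringRight J C C).obj F)) (j : J) : Coalgebra F :=
  ⟨A.V.obj j, A.str.app j⟩

def evalMap (A : Coalgebra ((Functor.whiskeringRight J C C).obj F)) {j j' : J} (g : j ⟶ j') :
    A.eval j ⟶ A.eval j' :=
  ⟨A.V.map g, (A.str.naturality g).symm⟩

def homToConstApp {A : Coalgebra ((Functor.whiskeringRight J C C).obj F)} {c : Coalgebra F}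
    (m : A ⟶ const J c) (j : J) : A.eval j ⟶ c :=
  ⟨m.f.app j, by simpa using congr_app m.h j⟩

variable {c : Coalgebra F} (hc : IsTerminal c)
include hc

def liftConst (A : Coalgebra ((Functor.whiskeringRight J C C).obj F)) : A ⟶ const J c where
  f :=
    { app := fun j => (hc.from (A.eval j)).f
      naturality := fun j j' g =>
        (congrArg Hom.f (hc.hom_ext (A.evalMap g ≫ hc.from _) (hc.from (A.eval j)))).trans
          (Category.comp_id _).symm }
  h := by
    ext j
    simpa using (hc.from (A.eval j)).h

def isTerminalConst : IsTerminal (const J c) :=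
  IsTerminal.ofUniqueHom (liftConst hc) fun A m => by
    ext j
    exact congrArg Hom.f (hc.hom_ext (homToConstApp m j) (hc.from (A.eval j)))

end CategoryTheory.Endofunctor.Coalgebra

theorem const_preserves_final_coalgebra_general
    {C : Type u} [Category.{v} C] (α : Ordinal.{w})
    (F : C ⥤ C)
    (c : Endofunctor.Coalgebra F) (hc : IsTerminal c) :
    Nonempty (IsTerminal
      (⟨(Functor.const (SuccStage α)ᵒᵖ).obj c.V,
        (Functor.const (SuccStage α)ᵒᵖ).map c.str ≫
          (Functor.constComp (SuccStage α)ᵒᵖ c.V F).inv⟩ :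
        Endofunctor.Coalgebra ((Functor.whiskeringRight (SuccStage α)ᵒᵖ C C).obj F))) :=
  ⟨Endofunctor.Coalgebra.isTerminalConst hc⟩

/-- If an endofunctor `F` on `C` has a final coalgebra, then the constant sheaf
functor `Δ : C ⥤ Sh_C(α)` takes it to a final coalgebra for the pointwise extension
`F^` of `F`. -/
theorem const_preserves_final_coalgebra
    {C : Type u} [Category.{v} C] (α : Ordinal.{w}) (hα : Order.IsSuccLimit α)
    (F : C ⥤ C)
    (c : Endofunctor.Coalgebra F) (hc : IsTerminal c) :
    Nonempty (IsTerminal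
      (⟨(Functor.const (SuccStage α)ᵒᵖ).obj c.V,
        (Functor.const (SuccStage α)ᵒᵖ).map c.str ≫
          (Functor.constComp (SuccStage α)ᵒᵖ c.V F).inv⟩ :
        Endofunctor.Coalgebra ((Functor.whiskeringRight (SuccStage α)ᵒᵖ C C).obj F))) :=
  const_preserves_final_coalgebra_general α F c hc
end

section
/- Let α > 1 be an ordinal, (T,μ,η) a monad and F an endofunctor on C, and ξ a distributive law of the pointwise-extended monad T^ over F^ ∘ ▶ on Sh_C(α), where ▶ is the later endofunctor. Then the family λ_X := ξ_{ΔX, β+2} (the component of ξ at the constant sheaf on X, evaluated at any double-successor stage β+2 < α) is independent of the choice of β and is a distributive law of (T,μ,η) over F on C. -/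
open CategoryTheory Opposite

universe w v u

/-- The stages of the Alexandrov topology of the ordinal `α`: its open sets are the
ordinals `≤ α`.  `C`-valued sheaves on this topology are presheaves on this poset
satisfying the sheaf (limit) condition at limit stages. -/
def Stage (α : Ordinal.{w}) : Type (w + 1) :=
  {β : Ordinal.{w} // β ≤ α}

instance (α : Ordinal.{w}) : Preorder (Stage α) :=
  Subtype.preorder _

/-!
At a double-successor stage `γ + 2` both `F^ ▶ T^` and `T^ F^ ▶` only read their argument at
stage `γ + 1`. By naturality of `ξ`, the component of `ξ` at `γ + 2` is therefore unchanged along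
any morphism of presheaves that is an identity at stage `γ + 1`, and every presheaf `P` is linked
by two such morphisms, out of `P` clamped below at `γ + 1`, to the constant presheaf on `P_{γ+1}`.
Hence `ξ_{ΔX, γ+2} = ξ_{const X, γ+2}`, and evaluating the laws of `ξ` at `const X` and stage
`γ + 2` gives the laws of `λ`; in the multiplication law `ξ_{T^(const X)}` is identified with
`λ_{TX}` in the same way. Independence of `γ` is naturality of `ξ_{const X}` along restrictions,
which are identities on both sides.

Morphisms whose (co)domains agree only propositionally are compared as objects of `Arrow C`.
-/

namespace CategoryTheory.Arrow

variable {C : Type u} [Category.{v} C]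

theorem mk_eq_mk_of_heq {X Y X' Y' : C} {f : X ⟶ Y} {f' : X' ⟶ Y'} (hX : X = X')
    (hY : Y = Y') (h : f ≍ f') : Arrow.mk f = Arrow.mk f' :=
  (mk_eq_mk_iff f f').2 ⟨hX, hY, (conj_eqToHom_iff_heq f f' hX hY).2 h⟩

theorem heq_of_mk_eq_mk {X Y X' Y' : C} {f : X ⟶ Y} {f' : X' ⟶ Y'}
    (h : Arrow.mk f = Arrow.mk f') : f ≍ f' := by
  obtain ⟨hX, hY, h⟩ := (mk_eq_mk_iff f f').1 h
  exact (conj_eqToHom_iff_heq f f' hX hY).1 h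

theorem mk_comp_eq_mk_comp {X Y Z X' Y' Z' : C} {f : X ⟶ Y} {g : Y ⟶ Z} {f' : X' ⟶ Y'}
    {g' : Y' ⟶ Z'} (hf : Arrow.mk f = Arrow.mk f') (hg : Arrow.mk g = Arrow.mk g') :
    Arrow.mk (f ≫ g) = Arrow.mk (f' ≫ g') := by
  obtain ⟨rfl, rfl, rfl⟩ := (mk_eq_mk_iff f f').1 hf
  obtain ⟨-, rfl, rfl⟩ := (mk_eq_mk_iff g g').1 hg
  simp

theorem mk_eq_mk_of_comm_sq {X Y X' Y' A B : C} {p : X ⟶ X'} {q : Y ⟶ Y'} {f : X ⟶ Y}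
    {g : X' ⟶ Y'} (w : p ≫ g = f ≫ q) (hp : Arrow.mk p = Arrow.mk (𝟙 A))
    (hq : Arrow.mk q = Arrow.mk (𝟙 B)) : Arrow.mk f = Arrow.mk g := by
  obtain ⟨rfl, rfl, rfl⟩ := (mk_eq_mk_iff p _).1 hp
  obtain ⟨rfl, rfl, rfl⟩ := (mk_eq_mk_iff q _).1 hq
  simpa using congrArg Arrow.mk w.symm

theorem mk_map_eq_mk_id_of_eq {D : Type*} [Preorder D] (P : Dᵒᵖ ⥤ C) {x y : D}
    (h : x ≤ y) (e : x = y) : Arrow.mk (P.map (homOfLE h).op) = Arrow.mk (𝟙 (P.obj (op x))) := by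
  subst e
  simp

end CategoryTheory.Arrow

section InducedLaw

variable {C : Type u} [Category.{v} C] {α : Ordinal.{w}}

/-- The behaviour of `T^` at successor stages. -/
structure IsPointwiseExtension (T : Monad C) (M : Monad ((Stage α)ᵒᵖ ⥤ C)) : Prop where
  obj : ∀ (X : (Stage α)ᵒᵖ ⥤ C) (γ : Ordinal.{w}) (hb : γ + 1 ≤ α),
    (M.obj X).obj (op ⟨γ + 1, hb⟩) = T.obj (X.obj (op ⟨γ + 1, hb⟩))
  res : ∀ (X : (Stage α)ᵒᵖ ⥤ C) (γ γ' : Ordinal.{w}) (hb : γ + 1 ≤ α)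
      (hb' : γ' + 1 ≤ α) (h : γ + 1 ≤ γ' + 1),
    (M.obj X).map (homOfLE (show (⟨γ + 1, hb⟩ : Stage α) ≤ ⟨γ' + 1, hb'⟩ from h)).op ≍
      T.map (X.map (homOfLE (show (⟨γ + 1, hb⟩ : Stage α) ≤ ⟨γ' + 1, hb'⟩ from h)).op)
  map : ∀ {X Y : (Stage α)ᵒᵖ ⥤ C} (g : X ⟶ Y) (γ : Ordinal.{w}) (hb : γ + 1 ≤ α),
    (M.map g).app (op ⟨γ + 1, hb⟩) ≍ T.map (g.app (op ⟨γ + 1, hb⟩))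
  eta : ∀ (X : (Stage α)ᵒᵖ ⥤ C) (γ : Ordinal.{w}) (hb : γ + 1 ≤ α),
    (M.η.app X).app (op ⟨γ + 1, hb⟩) ≍ T.η.app (X.obj (op ⟨γ + 1, hb⟩))
  mu : ∀ (X : (Stage α)ᵒᵖ ⥤ C) (γ : Ordinal.{w}) (hb : γ + 1 ≤ α),
    (M.μ.app X).app (op ⟨γ + 1, hb⟩) ≍ T.μ.app (X.obj (op ⟨γ + 1, hb⟩))

/-- The behaviour of `F^ ∘ ▶` at double-successor stages. -/
structure IsGuardedExtension (F : C ⥤ C) (G : ((Stage α)ᵒᵖ ⥤ C) ⥤ ((Stage α)ᵒᵖ ⥤ C)) :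
    Prop where
  obj : ∀ (X : (Stage α)ᵒᵖ ⥤ C) (γ : Ordinal.{w}) (hb : γ + 1 + 1 ≤ α),
    (G.obj X).obj (op ⟨γ + 1 + 1, hb⟩) = F.obj (X.obj (op ⟨γ + 1, le_self_add.trans hb⟩))
  res : ∀ (X : (Stage α)ᵒᵖ ⥤ C) (γ γ' : Ordinal.{w}) (hb : γ + 1 + 1 ≤ α)
      (hb' : γ' + 1 + 1 ≤ α) (h : γ + 1 + 1 ≤ γ' + 1 + 1),
    (G.obj X).map
        (homOfLE (show (⟨γ + 1 + 1, hb⟩ : Stage α) ≤ ⟨γ' + 1 + 1, hb'⟩ from h)).op ≍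
      F.map (X.map (homOfLE (show (⟨γ + 1, le_self_add.trans hb⟩ : Stage α) ≤
        ⟨γ' + 1, le_self_add.trans hb'⟩ from by simpa using h)).op)
  map : ∀ {X Y : (Stage α)ᵒᵖ ⥤ C} (g : X ⟶ Y) (γ : Ordinal.{w}) (hb : γ + 1 + 1 ≤ α),
    (G.map g).app (op ⟨γ + 1 + 1, hb⟩) ≍ F.map (g.app (op ⟨γ + 1, le_self_add.trans hb⟩))

namespace IsPointwiseExtension

variable {T : Monad C} {M : Monad ((Stage α)ᵒᵖ ⥤ C)}

theorem mk_map_res (hM : IsPointwiseExtension T M) (X : (Stage α)ᵒᵖ ⥤ C)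
    {γ γ' : Ordinal.{w}} (hb : γ + 1 ≤ α) (hb' : γ' + 1 ≤ α) (h : γ + 1 ≤ γ' + 1) :
    Arrow.mk ((M.obj X).map
        (homOfLE (show (⟨γ + 1, hb⟩ : Stage α) ≤ ⟨γ' + 1, hb'⟩ from h)).op) =
      T.mapArrow.obj (Arrow.mk (X.map
        (homOfLE (show (⟨γ + 1, hb⟩ : Stage α) ≤ ⟨γ' + 1, hb'⟩ from h)).op)) :=
  Arrow.mk_eq_mk_of_heq (hM.obj X γ' hb') (hM.obj X γ hb) (hM.res X γ γ' hb hb' h)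

theorem mk_map_app (hM : IsPointwiseExtension T M) {X Y : (Stage α)ᵒᵖ ⥤ C} (g : X ⟶ Y)
    (γ : Ordinal.{w}) (hb : γ + 1 ≤ α) :
    Arrow.mk ((M.map g).app (op ⟨γ + 1, hb⟩)) =
      T.mapArrow.obj (Arrow.mk (g.app (op ⟨γ + 1, hb⟩))) :=
  Arrow.mk_eq_mk_of_heq (hM.obj X γ hb) (hM.obj Y γ hb) (hM.map g γ hb)

theorem mk_eta_app (hM : IsPointwiseExtension T M) (X : (Stage α)ᵒᵖ ⥤ C)
    (γ : Ordinal.{w}) (hb : γ + 1 ≤ α) :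
    Arrow.mk ((M.η.app X).app (op ⟨γ + 1, hb⟩)) =
      Arrow.mk (T.η.app (X.obj (op ⟨γ + 1, hb⟩))) :=
  Arrow.mk_eq_mk_of_heq rfl (hM.obj X γ hb) (hM.eta X γ hb)

theorem mk_mu_app (hM : IsPointwiseExtension T M) (X : (Stage α)ᵒᵖ ⥤ C)
    (γ : Ordinal.{w}) (hb : γ + 1 ≤ α) :
    Arrow.mk ((M.μ.app X).app (op ⟨γ + 1, hb⟩)) =
      Arrow.mk (T.μ.app (X.obj (op ⟨γ + 1, hb⟩))) :=
  Arrow.mk_eq_mk_of_heq ((hM.obj _ γ hb).trans (congrArg T.obj (hM.obj X γ hb)))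
    (hM.obj X γ hb) (hM.mu X γ hb)

end IsPointwiseExtension

namespace IsGuardedExtension

variable {F : C ⥤ C} {G : ((Stage α)ᵒᵖ ⥤ C) ⥤ ((Stage α)ᵒᵖ ⥤ C)}

theorem mk_map_res (hG : IsGuardedExtension F G) (X : (Stage α)ᵒᵖ ⥤ C)
    {γ γ' : Ordinal.{w}} (hb : γ + 1 + 1 ≤ α) (hb' : γ' + 1 + 1 ≤ α)
    (h : γ + 1 + 1 ≤ γ' + 1 + 1) :
    Arrow.mk ((G.obj X).map
        (homOfLE (show (⟨γ + 1 + 1, hb⟩ : Stage α) ≤ ⟨γ' + 1 + 1, hb'⟩ from h)).op) =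
      F.mapArrow.obj (Arrow.mk (X.map (homOfLE (show (⟨γ + 1, le_self_add.trans hb⟩ :
          Stage α) ≤ ⟨γ' + 1, le_self_add.trans hb'⟩ from by simpa using h)).op)) :=
  Arrow.mk_eq_mk_of_heq (hG.obj X γ' hb') (hG.obj X γ hb) (hG.res X γ γ' hb hb' h)

theorem mk_map_app (hG : IsGuardedExtension F G) {X Y : (Stage α)ᵒᵖ ⥤ C} (g : X ⟶ Y)
    (γ : Ordinal.{w}) (hb : γ + 1 + 1 ≤ α) :
    Arrow.mk ((G.map g).app (op ⟨γ + 1 + 1, hb⟩)) =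
      F.mapArrow.obj (Arrow.mk (g.app (op ⟨γ + 1, le_self_add.trans hb⟩))) :=
  Arrow.mk_eq_mk_of_heq (hG.obj X γ hb) (hG.obj Y γ hb) (hG.map g γ hb)

end IsGuardedExtension

namespace Stage

noncomputable def maxWith (a : Stage α) : Stage α ⥤ Stage α :=
  Monotone.functor (f := fun b => (⟨max b.1 a.1, max_le b.2 a.2⟩ : Stage α))
    fun _ _ h => show max _ a.1 ≤ max _ a.1 from max_le_max_right a.1 h

noncomputable def maxWithToSelf (P : (Stage α)ᵒᵖ ⥤ C) (a : Stage α) :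
    (maxWith a).op ⋙ P ⟶ P where
  app b := P.map (homOfLE (le_max_left b.unop.1 a.1 : b.unop ≤ (maxWith a).obj b.unop)).op
  naturality _ _ _ :=
    (P.map_comp _ _).symm.trans ((congrArg P.map (Subsingleton.elim _ _)).trans (P.map_comp _ _))

noncomputable def maxWithToConst (P : (Stage α)ᵒᵖ ⥤ C) (a : Stage α) :
    (maxWith a).op ⋙ P ⟶ (Functor.const _).obj (P.obj (op a)) where
  app b := P.map (homOfLE (le_max_right b.unop.1 a.1 : a ≤ (maxWith a).obj b.unop)).op
  naturality _ _ _ :=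
    (P.map_comp _ _).symm.trans ((congrArg P.map (Subsingleton.elim _ _)).trans
      (Category.comp_id _).symm)

end Stage

namespace DistLaw

variable {T : Monad C} {F : C ⥤ C} {M : Monad ((Stage α)ᵒᵖ ⥤ C)}
  {G : ((Stage α)ᵒᵖ ⥤ C) ⥤ ((Stage α)ᵒᵖ ⥤ C)}

theorem mk_nat_app_eq_of_mk_app_eq_id (hM : IsPointwiseExtension T M)
    (hG : IsGuardedExtension F G) (ξ : DistLaw M G) {P Q : (Stage α)ᵒᵖ ⥤ C} (g : P ⟶ Q)
    {γ : Ordinal.{w}} (hb : γ + 1 + 1 ≤ α) {A : C}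
    (hg : Arrow.mk (g.app (op ⟨γ + 1, le_self_add.trans hb⟩)) = Arrow.mk (𝟙 A)) :
    Arrow.mk ((ξ.nat.app P).app (op ⟨γ + 1 + 1, hb⟩)) =
      Arrow.mk ((ξ.nat.app Q).app (op ⟨γ + 1 + 1, hb⟩)) := by
  have w := NatTrans.congr_app (ξ.nat.naturality g) (op ⟨γ + 1 + 1, hb⟩)
  simp only [NatTrans.comp_app, Functor.comp_map] at w
  refine Arrow.mk_eq_mk_of_comm_sq (A := F.obj (T.obj A)) (B := T.obj (F.obj A)) w ?_ ?_
  · rw [hG.mk_map_app, hM.mk_map_app, hg]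
    simp
  · rw [hM.mk_map_app (γ := γ + 1), hG.mk_map_app, hg]
    simp

theorem mk_nat_app_eq_const (hM : IsPointwiseExtension T M) (hG : IsGuardedExtension F G)
    (ξ : DistLaw M G) (P : (Stage α)ᵒᵖ ⥤ C) {γ : Ordinal.{w}} (hb : γ + 1 + 1 ≤ α) :
    Arrow.mk ((ξ.nat.app P).app (op ⟨γ + 1 + 1, hb⟩)) =
      Arrow.mk ((ξ.nat.app ((Functor.const _).obj
        (P.obj (op ⟨γ + 1, le_self_add.trans hb⟩)))).app (op ⟨γ + 1 + 1, hb⟩)) := by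
  set a : Stage α := ⟨γ + 1, le_self_add.trans hb⟩
  -- at stage `a` both morphisms out of the clamped presheaf are `P.map` of `a ≤ max a a = a`
  have h : Arrow.mk ((Stage.maxWithToSelf P a).app (op a)) = Arrow.mk (𝟙 (P.obj (op a))) :=
    Arrow.mk_map_eq_mk_id_of_eq P _ (Subtype.ext (max_self _).symm)
  exact (ξ.mk_nat_app_eq_of_mk_app_eq_id hM hG _ hb h).symm.trans
    (ξ.mk_nat_app_eq_of_mk_app_eq_id hM hG (Stage.maxWithToConst P a) hb h)

theorem mk_nat_app_const_eq_of_le (hM : IsPointwiseExtension T M)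
    (hG : IsGuardedExtension F G) (ξ : DistLaw M G) (X : C) {γ γ' : Ordinal.{w}}
    (hb : γ + 1 + 1 ≤ α) (hb' : γ' + 1 + 1 ≤ α) (h : γ ≤ γ') :
    Arrow.mk ((ξ.nat.app ((Functor.const _).obj X)).app (op ⟨γ' + 1 + 1, hb'⟩)) =
      Arrow.mk ((ξ.nat.app ((Functor.const _).obj X)).app (op ⟨γ + 1 + 1, hb⟩)) := by
  have hle : γ + 1 + 1 ≤ γ' + 1 + 1 := by gcongr
  refine Arrow.mk_eq_mk_of_comm_sq (A := F.obj (T.obj X)) (B := T.obj (F.obj X))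
    ((ξ.nat.app _).naturality
      (homOfLE (show (⟨γ + 1 + 1, hb⟩ : Stage α) ≤ ⟨γ' + 1 + 1, hb'⟩ from hle)).op) ?_ ?_
  · refine (hG.mk_map_res _ hb hb' hle).trans ?_
    rw [hM.mk_map_res _ _ _ (by gcongr)]
    exact congrArg Arrow.mk ((congrArg F.map (T.map_id X)).trans (F.map_id _))
  · refine (hM.mk_map_res _ hb hb' hle).trans ?_
    rw [hG.mk_map_res _ _ _ hle]
    exact congrArg Arrow.mk ((congrArg T.map (F.map_id X)).trans (T.map_id _))

def stageApp (hM : IsPointwiseExtension T M) (hG : IsGuardedExtension F G)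
    (ξ : DistLaw M G) {γ : Ordinal.{w}} (hb : γ + 1 + 1 ≤ α) (X : C) :
    F.obj (T.obj X) ⟶ T.obj (F.obj X) :=
  eqToHom ((hG.obj _ γ hb).trans (congrArg F.obj (hM.obj ((Functor.const _).obj X) γ _))).symm ≫
    (ξ.nat.app ((Functor.const _).obj X)).app (op ⟨γ + 1 + 1, hb⟩) ≫
    eqToHom ((hM.obj _ (γ + 1) hb).trans (congrArg T.obj (hG.obj ((Functor.const _).obj X) γ hb)))

variable (hM : IsPointwiseExtension T M) (hG : IsGuardedExtension F G) (ξ : DistLaw M G)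
  {γ : Ordinal.{w}} (hb : γ + 1 + 1 ≤ α)

theorem mk_stageApp (X : C) :
    Arrow.mk (ξ.stageApp hM hG hb X) =
      Arrow.mk ((ξ.nat.app ((Functor.const _).obj X)).app (op ⟨γ + 1 + 1, hb⟩)) := by
  simp [stageApp]

theorem stageApp_naturality {X Y : C} (f : X ⟶ Y) :
    F.map (T.map f) ≫ ξ.stageApp hM hG hb Y = ξ.stageApp hM hG hb X ≫ T.map (F.map f) := by
  have w := NatTrans.congr_app (ξ.nat.naturality ((Functor.const _).map f)) (op ⟨γ + 1 + 1, hb⟩)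
  simp only [NatTrans.comp_app, Functor.comp_map] at w
  refine (Arrow.mk_inj _ _).1 ?_
  calc Arrow.mk (F.map (T.map f) ≫ ξ.stageApp hM hG hb Y)
      = Arrow.mk ((G.map (M.map ((Functor.const _).map f))).app (op ⟨γ + 1 + 1, hb⟩) ≫
          (ξ.nat.app ((Functor.const _).obj Y)).app (op ⟨γ + 1 + 1, hb⟩)) :=
        Arrow.mk_comp_eq_mk_comp (by rw [hG.mk_map_app, hM.mk_map_app]; rfl)
          (ξ.mk_stageApp hM hG hb Y)
    _ = Arrow.mk ((ξ.nat.app ((Functor.const _).obj X)).app (op ⟨γ + 1 + 1, hb⟩) ≫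
          (M.map (G.map ((Functor.const _).map f))).app (op ⟨γ + 1 + 1, hb⟩)) := by rw [w]
    _ = Arrow.mk (ξ.stageApp hM hG hb X ≫ T.map (F.map f)) :=
        Arrow.mk_comp_eq_mk_comp (ξ.mk_stageApp hM hG hb X).symm
          (by rw [hM.mk_map_app (γ := γ + 1), hG.mk_map_app]; rfl)

theorem stageApp_eta (X : C) :
    F.map (T.η.app X) ≫ ξ.stageApp hM hG hb X = T.η.app (F.obj X) := by
  have w := NatTrans.congr_app (ξ.eta_compat ((Functor.const _).obj X)) (op ⟨γ + 1 + 1, hb⟩)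
  simp only [NatTrans.comp_app] at w
  refine (Arrow.mk_inj _ _).1 ?_
  calc Arrow.mk (F.map (T.η.app X) ≫ ξ.stageApp hM hG hb X)
      = Arrow.mk ((G.map (M.η.app ((Functor.const _).obj X))).app (op ⟨γ + 1 + 1, hb⟩) ≫
          (ξ.nat.app ((Functor.const _).obj X)).app (op ⟨γ + 1 + 1, hb⟩)) :=
        Arrow.mk_comp_eq_mk_comp (by rw [hG.mk_map_app, hM.mk_eta_app]; rfl)
          (ξ.mk_stageApp hM hG hb X)
    _ = Arrow.mk ((M.η.app (G.obj ((Functor.const _).obj X))).app (op ⟨γ + 1 + 1, hb⟩)) := by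
        rw [w]
    _ = Arrow.mk (T.η.app (F.obj X)) := by
        rw [hM.mk_eta_app (γ := γ + 1), hG.obj]
        rfl

theorem stageApp_mu (X : C) :
    F.map (T.μ.app X) ≫ ξ.stageApp hM hG hb X =
      ξ.stageApp hM hG hb (T.obj X) ≫ T.map (ξ.stageApp hM hG hb X) ≫ T.μ.app (F.obj X) := by
  have w := NatTrans.congr_app (ξ.mu_compat ((Functor.const _).obj X)) (op ⟨γ + 1 + 1, hb⟩)
  simp only [NatTrans.comp_app] at w
  have hξ : Arrow.mk ((ξ.nat.app (M.obj ((Functor.const _).obj X))).app (op ⟨γ + 1 + 1, hb⟩)) =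
      Arrow.mk (ξ.stageApp hM hG hb (T.obj X)) := by
    rw [ξ.mk_nat_app_eq_const hM hG, hM.obj, ξ.mk_stageApp hM hG hb]
    rfl
  have hTξ : Arrow.mk ((M.map (ξ.nat.app ((Functor.const _).obj X))).app (op ⟨γ + 1 + 1, hb⟩)) =
      Arrow.mk (T.map (ξ.stageApp hM hG hb X)) := by
    rw [hM.mk_map_app (γ := γ + 1), ← ξ.mk_stageApp hM hG hb X]
    rfl
  have hμ : Arrow.mk ((M.μ.app (G.obj ((Functor.const _).obj X))).app (op ⟨γ + 1 + 1, hb⟩)) =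
      Arrow.mk (T.μ.app (F.obj X)) := by
    rw [hM.mk_mu_app (γ := γ + 1), hG.obj]
    rfl
  refine (Arrow.mk_inj _ _).1 ?_
  calc Arrow.mk (F.map (T.μ.app X) ≫ ξ.stageApp hM hG hb X)
      = Arrow.mk ((G.map (M.μ.app ((Functor.const _).obj X))).app (op ⟨γ + 1 + 1, hb⟩) ≫
          (ξ.nat.app ((Functor.const _).obj X)).app (op ⟨γ + 1 + 1, hb⟩)) :=
        Arrow.mk_comp_eq_mk_comp (by rw [hG.mk_map_app, hM.mk_mu_app]; rfl)
          (ξ.mk_stageApp hM hG hb X)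
    _ = _ := by rw [w]
    _ = _ := Arrow.mk_comp_eq_mk_comp hξ (Arrow.mk_comp_eq_mk_comp hTξ hμ)

def stageLaw : DistLaw T F where
  nat := { app := ξ.stageApp hM hG hb, naturality := fun _ _ f => ξ.stageApp_naturality hM hG hb f }
  mu_compat := ξ.stageApp_mu hM hG hb
  eta_compat := ξ.stageApp_eta hM hG hb

end DistLaw

end InducedLaw

/-- Let `α > 1`, `(T,μ,η)` a monad and `F` an endofunctor on `C`.  Let `Δ` be the
constant sheaf functor (value `X` at every stage `≥ 1`, with identity restrictions),
`T^` the pointwise extension of the monad `T` (acting as `T` — on values, on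
restrictions, on morphisms, and on the unit and multiplication — at every successor
stage), and `F^ ∘ ▶` the guarded pointwise extension of `F` (acting as
`(F^ ▶ X)_{β+2} = F (X_{β+1})` at double-successor stages).  Then for any
distributive law `ξ` of `T^` over `F^ ∘ ▶`, the components `ξ_{ΔX, β+2}` are
independent of the choice of `β` and constitute a distributive law `λ : FT ⟶ TF` of
`(T,μ,η)` over `F`. -/
theorem induced_distributive_law
    {C : Type u} [Category.{v} C] (α : Ordinal.{w}) (hα : 1 < α)
    (T : Monad C) (F : C ⥤ C)
    -- the constant sheaf functor `Δ : C ⥤ Sh_C(α)`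
    (Dl : C ⥤ ((Stage α)ᵒᵖ ⥤ C))
    (hD_obj : ∀ (X : C) (b : Ordinal.{w}) (hb : b ≤ α), 1 ≤ b →
      (Dl.obj X).obj (op ⟨b, hb⟩) = X)
    -- the pointwise extension `T^` of the monad `T`
    (M : Monad ((Stage α)ᵒᵖ ⥤ C))
    (hM_obj : ∀ (X : (Stage α)ᵒᵖ ⥤ C) (γ : Ordinal.{w}) (hb : γ + 1 ≤ α),
      (M.obj X).obj (op ⟨γ + 1, hb⟩) = T.obj (X.obj (op ⟨γ + 1, hb⟩)))
    (hM_res : ∀ (X : (Stage α)ᵒᵖ ⥤ C) (γ γ' : Ordinal.{w}) (hb : γ + 1 ≤ α)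
      (hb' : γ' + 1 ≤ α) (h : γ + 1 ≤ γ' + 1),
      HEq ((M.obj X).map
          (homOfLE (show (⟨γ + 1, hb⟩ : Stage α) ≤ ⟨γ' + 1, hb'⟩ from h)).op)
        (T.map (X.map
          (homOfLE (show (⟨γ + 1, hb⟩ : Stage α) ≤ ⟨γ' + 1, hb'⟩ from h)).op)))
    (hM_map : ∀ {X Y : (Stage α)ᵒᵖ ⥤ C} (g : X ⟶ Y) (γ : Ordinal.{w})
      (hb : γ + 1 ≤ α),
      HEq ((M.map g).app (op ⟨γ + 1, hb⟩)) (T.map (g.app (op ⟨γ + 1, hb⟩))))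
    (hM_eta : ∀ (X : (Stage α)ᵒᵖ ⥤ C) (γ : Ordinal.{w}) (hb : γ + 1 ≤ α),
      HEq ((M.η.app X).app (op ⟨γ + 1, hb⟩)) (T.η.app (X.obj (op ⟨γ + 1, hb⟩))))
    (hM_mu : ∀ (X : (Stage α)ᵒᵖ ⥤ C) (γ : Ordinal.{w}) (hb : γ + 1 ≤ α),
      HEq ((M.μ.app X).app (op ⟨γ + 1, hb⟩)) (T.μ.app (X.obj (op ⟨γ + 1, hb⟩))))
    -- the guarded pointwise extension `F^ ∘ ▶` of `F`
    (G : ((Stage α)ᵒᵖ ⥤ C) ⥤ ((Stage α)ᵒᵖ ⥤ C))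
    (hG_obj : ∀ (X : (Stage α)ᵒᵖ ⥤ C) (γ : Ordinal.{w}) (hb : γ + 1 + 1 ≤ α),
      (G.obj X).obj (op ⟨γ + 1 + 1, hb⟩) =
        F.obj (X.obj (op ⟨γ + 1, le_trans (le_add_right le_rfl) hb⟩)))
    (hG_res : ∀ (X : (Stage α)ᵒᵖ ⥤ C) (γ γ' : Ordinal.{w}) (hb : γ + 1 + 1 ≤ α)
      (hb' : γ' + 1 + 1 ≤ α) (h : γ + 1 + 1 ≤ γ' + 1 + 1),
      HEq ((G.obj X).map
          (homOfLE (show (⟨γ + 1 + 1, hb⟩ : Stage α) ≤ ⟨γ' + 1 + 1, hb'⟩ from h)).op)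
        (F.map (X.map (homOfLE (show (⟨γ + 1, le_trans (le_add_right le_rfl) hb⟩ :
            Stage α) ≤ ⟨γ' + 1, le_trans (le_add_right le_rfl) hb'⟩ from
              by simpa using h)).op)))
    (hG_map : ∀ {X Y : (Stage α)ᵒᵖ ⥤ C} (g : X ⟶ Y) (γ : Ordinal.{w})
      (hb : γ + 1 + 1 ≤ α),
      HEq ((G.map g).app (op ⟨γ + 1 + 1, hb⟩))
        (F.map (g.app (op ⟨γ + 1, le_trans (le_add_right le_rfl) hb⟩))))
    -- a distributive law of `T^` over `F^ ∘ ▶`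
    (ξ : DistLaw M G) :
    ∃ l : DistLaw T F,
      ∀ (X : C) (β : Ordinal.{w}) (h : β + 1 + 1 ≤ α),
        HEq ((ξ.nat.app (Dl.obj X)).app (op ⟨β + 1 + 1, h⟩)) (l.nat.app X) := by
  have h0 : (0 : Ordinal.{w}) + 1 + 1 ≤ α := by
    rw [zero_add]
    exact Order.add_one_le_iff.mpr hα
  have hM : IsPointwiseExtension T M := ⟨hM_obj, hM_res, hM_map, hM_eta, hM_mu⟩
  have hG : IsGuardedExtension F G := ⟨hG_obj, hG_res, hG_map⟩
  refine ⟨ξ.stageLaw hM hG h0, fun X β h => Arrow.heq_of_mk_eq_mk ?_⟩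
  calc Arrow.mk ((ξ.nat.app (Dl.obj X)).app (op ⟨β + 1 + 1, h⟩))
      = Arrow.mk ((ξ.nat.app ((Functor.const _).obj X)).app (op ⟨β + 1 + 1, h⟩)) := by
        rw [ξ.mk_nat_app_eq_const hM hG, hD_obj X _ _ le_add_self]
    _ = Arrow.mk ((ξ.nat.app ((Functor.const _).obj X)).app (op ⟨0 + 1 + 1, h0⟩)) :=
        ξ.mk_nat_app_const_eq_of_le hM hG X h0 h zero_le
    _ = Arrow.mk ((ξ.stageLaw hM hG h0).nat.app X) := (ξ.mk_stageApp hM hG h0 X).symm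
end

section
/- Let (T,μ,η) be a monad and F an endofunctor on C with a distributive law λ : FT ⟶ TF that is ω-suitable, meaning η_{F1} ∘ F(!_{TX}) = T(F !_X) ∘ λ_X for every object X (where !_A denotes the unique map to the terminal object 1). Then there is a distributive law ξ of T^ over F^ ∘ ▶ on Sh_C(ω) given at stage 0 by id_1, at stage 1 by η_{F1}, at stage n+2 by λ_{Y_{n+1}}, and at stage ω by the induced mediating map. -/
/-!
At stage `n + 2` the law `ξ` is `λ` at `Y_{n+1}`, so there its naturality and its compatibility
with `μ` and `η` are those of `λ`, transported along `(▶Y)_{n+2} = Y_{n+1}`. At stage `1` every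
map into `(▶Y)_1 = 1` is the unique one, so the monad axioms hold by terminality; the one
remaining condition, naturality of `ξ` with respect to the restriction from stage `n + 2` to
stage `1`, is precisely ω-suitability. The components at stages `0` and `ω` are forced by the
sheaf condition, so it suffices to work with presheaves on the successor stages.
-/

open CategoryTheory CategoryTheory.Limits Opposite

universe v u

section

variable {C : Type u} [Category.{v} C]

/-- The later endofunctor `▶`, on presheaves indexed so that `n : ℕ` is the stage `n + 1`. -/
structure IsLaterFunctor (L : (ℕᵒᵖ ⥤ C) ⥤ (ℕᵒᵖ ⥤ C)) where
  isTerminalZero : ∀ X : ℕᵒᵖ ⥤ C, IsTerminal ((L.obj X).obj (op 0))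
  obj_succ : ∀ (X : ℕᵒᵖ ⥤ C) (n : ℕ), (L.obj X).obj (op (n + 1)) = X.obj (op n)
  map_succ : ∀ (X : ℕᵒᵖ ⥤ C) (n m : ℕ) (h : m ≤ n),
    (L.obj X).map (homOfLE (Nat.succ_le_succ h)).op =
      eqToHom (obj_succ X n) ≫ X.map (homOfLE h).op ≫ eqToHom (obj_succ X m).symm
  map_app_succ : ∀ {X Y : ℕᵒᵖ ⥤ C} (f : X ⟶ Y) (n : ℕ),
    (L.map f).app (op (n + 1)) =
      eqToHom (obj_succ X n) ≫ f.app (op n) ≫ eqToHom (obj_succ Y n).symm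

namespace DistLaw

variable {T : Monad C} {F : C ⥤ C} (l : DistLaw T F)

def OmegaSuitable [HasTerminal C] : Prop :=
  ∀ X : C, l.nat.app X ≫ T.map (F.map (terminal.from X)) =
    F.map (terminal.from (T.obj X)) ≫ T.η.app (F.obj (⊤_ C))

theorem OmegaSuitable.nat_app_comp_map_from [HasTerminal C] {l : DistLaw T F}
    (hl : l.OmegaSuitable) {Z : C} (t : IsTerminal Z) (X : C) :
    l.nat.app X ≫ T.map (F.map (t.from X)) = F.map (t.from (T.obj X)) ≫ T.η.app (F.obj Z) := by
  have from_eq (A : C) : t.from A = terminal.from A ≫ (terminalIsTerminal.uniqueUpToIso t).hom :=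
    t.hom_ext _ _
  simp only [from_eq, F.map_comp, T.map_comp, reassoc_of% hl X, Category.assoc]
  exact congrArg _ (T.η.naturality _).symm

variable {L : (ℕᵒᵖ ⥤ C) ⥤ (ℕᵒᵖ ⥤ C)} (hL : IsLaterFunctor L)

def laterApp (Y : ℕᵒᵖ ⥤ C) :
    ∀ n : ℕ,
      F.obj ((L.obj (Y ⋙ T.toFunctor)).obj (op n)) ⟶ T.obj (F.obj ((L.obj Y).obj (op n)))
  | 0 => F.map ((hL.isTerminalZero Y).from _) ≫ T.η.app (F.obj ((L.obj Y).obj (op 0)))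
  | n + 1 =>
      F.map (eqToHom (hL.obj_succ (Y ⋙ T.toFunctor) n)) ≫ l.nat.app (Y.obj (op n)) ≫
        T.map (F.map (eqToHom (hL.obj_succ Y n).symm))

theorem laterApp_succ (Y : ℕᵒᵖ ⥤ C) (n : ℕ) :
    l.laterApp hL Y (n + 1) =
      eqToHom (congrArg F.obj (hL.obj_succ (Y ⋙ T.toFunctor) n)) ≫ l.nat.app (Y.obj (op n)) ≫
        eqToHom (congrArg (fun c => T.obj (F.obj c)) (hL.obj_succ Y n).symm) := by
  simp [laterApp, eqToHom_map]

theorem laterApp_naturality_stage_succ (Y : ℕᵒᵖ ⥤ C) {n m : ℕ} (h : m ≤ n) :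
    F.map ((L.obj (Y ⋙ T.toFunctor)).map (homOfLE (Nat.succ_le_succ h)).op) ≫
        l.laterApp hL Y (m + 1) =
      l.laterApp hL Y (n + 1) ≫
        T.map (F.map ((L.obj Y).map (homOfLE (Nat.succ_le_succ h)).op)) := by
  rw [hL.map_succ _ n m h, hL.map_succ _ n m h]
  simp only [laterApp, Functor.map_comp, Category.assoc, eqToHom_map, eqToHom_trans_assoc,
    eqToHom_refl, Category.id_comp, Functor.comp_map]
  rw [reassoc_of% (l.nat.naturality (Y.map (homOfLE h).op))]

theorem laterApp_naturality_stage_zero [HasTerminal C] (hl : l.OmegaSuitable)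
    (Y : ℕᵒᵖ ⥤ C) (n : ℕ) :
    F.map ((L.obj (Y ⋙ T.toFunctor)).map (homOfLE (Nat.zero_le n)).op) ≫ l.laterApp hL Y 0 =
      l.laterApp hL Y n ≫ T.map (F.map ((L.obj Y).map (homOfLE (Nat.zero_le n)).op)) := by
  cases n with
  | zero => simp
  | succ n =>
    have t := hL.isTerminalZero Y
    simp only [laterApp, Category.assoc, ← T.map_comp, ← F.map_comp,
      t.hom_ext (_ ≫ _) (t.from _), hl.nat_app_comp_map_from t, ← F.map_comp_assoc]

theorem laterApp_naturality_stage [HasTerminal C] (hl : l.OmegaSuitable)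
    (Y : ℕᵒᵖ ⥤ C) {n m : ℕ} (h : m ≤ n) :
    F.map ((L.obj (Y ⋙ T.toFunctor)).map (homOfLE h).op) ≫ l.laterApp hL Y m =
      l.laterApp hL Y n ≫ T.map (F.map ((L.obj Y).map (homOfLE h).op)) := by
  cases m with
  | zero => exact l.laterApp_naturality_stage_zero hL hl Y n
  | succ m =>
    obtain ⟨n, rfl⟩ : ∃ k, n = k + 1 := ⟨n - 1, by omega⟩
    exact l.laterApp_naturality_stage_succ hL Y (Nat.succ_le_succ_iff.mp h)

theorem laterApp_naturality {Y Y' : ℕᵒᵖ ⥤ C} (f : Y ⟶ Y') (n : ℕ) :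
    F.map ((L.map (Functor.whiskerRight f T.toFunctor)).app (op n)) ≫ l.laterApp hL Y' n =
      l.laterApp hL Y n ≫ T.map (F.map ((L.map f).app (op n))) := by
  cases n with
  | zero =>
    have t := hL.isTerminalZero Y'
    simp only [laterApp, Category.assoc, ← T.η.naturality, Functor.id_map, ← F.map_comp_assoc,
      t.hom_ext (_ ≫ _) (t.from _)]
  | succ n =>
    rw [hL.map_app_succ, hL.map_app_succ]
    simp only [laterApp, Functor.whiskerRight_app, Functor.map_comp, Category.assoc, eqToHom_map,
      eqToHom_trans_assoc, eqToHom_refl, Category.id_comp]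
    rw [reassoc_of% (l.nat.naturality (f.app (op n)))]

theorem laterApp_mu_compat (Y : ℕᵒᵖ ⥤ C) (n : ℕ) :
    F.map ((L.map (Functor.whiskerLeft Y T.μ)).app (op n)) ≫ l.laterApp hL Y n =
      l.laterApp hL (Y ⋙ T.toFunctor) n ≫ T.map (l.laterApp hL Y n) ≫
        T.μ.app (F.obj ((L.obj Y).obj (op n))) := by
  cases n with
  | zero =>
    have t := hL.isTerminalZero Y
    simp only [laterApp, Category.assoc, ← T.η.naturality_assoc, Functor.id_map, Monad.left_unit,
      Category.comp_id, ← F.map_comp_assoc, t.hom_ext (_ ≫ _) (t.from _)]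
    rfl
  | succ n =>
    rw [hL.map_app_succ]
    simp only [laterApp, Functor.whiskerLeft_app, Functor.map_comp, Category.assoc, eqToHom_map,
      eqToHom_trans_assoc, eqToHom_refl, Category.id_comp]
    rw [reassoc_of% (l.mu_compat (Y.obj (op n))),
      eqToHom_naturality (fun c => T.μ.app (F.obj c)) (hL.obj_succ Y n).symm]
    rfl

theorem laterApp_eta_compat (Y : ℕᵒᵖ ⥤ C) (n : ℕ) :
    F.map ((L.map (Y.rightUnitor.inv ≫ Functor.whiskerLeft Y T.η)).app (op n)) ≫
        l.laterApp hL Y n =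
      T.η.app (F.obj ((L.obj Y).obj (op n))) := by
  cases n with
  | zero =>
    have t := hL.isTerminalZero Y
    simp [laterApp, ← F.map_comp_assoc, t.hom_ext (_ ≫ _) (𝟙 _)]
  | succ n =>
    rw [hL.map_app_succ]
    simp only [laterApp, NatTrans.comp_app, Functor.rightUnitor_inv_app, Functor.whiskerLeft_app,
      Functor.map_comp, Category.assoc, eqToHom_map, eqToHom_trans_assoc, eqToHom_refl,
      Category.id_comp]
    rw [reassoc_of% (l.eta_compat (Y.obj (op n))),
      eqToHom_naturality (fun c => T.η.app (F.obj c)) (hL.obj_succ Y n).symm]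
    simp

def laterLaw [HasTerminal C] (hl : l.OmegaSuitable) :
    (Functor.whiskeringRight ℕᵒᵖ C C).obj T.toFunctor ⋙ L ⋙
        (Functor.whiskeringRight ℕᵒᵖ C C).obj F ⟶
      (L ⋙ (Functor.whiskeringRight ℕᵒᵖ C C).obj F) ⋙
        (Functor.whiskeringRight ℕᵒᵖ C C).obj T.toFunctor where
  app Y :=
    { app b := l.laterApp hL Y b.unop
      naturality _ _ f := l.laterApp_naturality_stage hL hl Y (leOfHom f.unop) }
  naturality _ _ f := by
    ext ⟨n⟩
    exact l.laterApp_naturality hL f n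

end DistLaw

end

/-- `Sh_C(ω)` presented as presheaves on the base of successor stages: the index
`n : ℕ` corresponds to the stage `n+1`; the value at stage `0` is the terminal
object and the value at stage `ω` is the limit, both determined by the sheaf
condition.  The pointwise extensions `T^` and `F^` are given by postcomposition, and
the later endofunctor `▶` satisfies `(▶Y)_{n+1} = Y_n` and `(▶Y)_0 = 1`.

Given an ω-suitable distributive law `λ : FT ⟶ TF` — meaning
`η_{F1} ∘ F(!_{TX}) = T(F !_X) ∘ λ_X` — there is a distributive law `ξ` of `T^` over
`F^ ∘ ▶` on `Sh_C(ω)` given at stage `1` by `η_{F1}` and at stage `n+2` by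
`λ_{Y_{n+1}}` (its components at stages `0` and `ω` being the identity of `1` and
the induced mediating map, which are determined by the sheaf condition). -/
theorem omega_suitable_distLaw_extends
    {C : Type u} [Category.{v} C] [HasTerminal C]
    (T : Monad C) (F : C ⥤ C) (l : DistLaw T F)
    (hsuit : ∀ X : C,
      l.nat.app X ≫ T.map (F.map (terminal.from X)) =
        F.map (terminal.from (T.obj X)) ≫ T.η.app (F.obj (⊤_ C)))
    -- the later endofunctor `▶` on `Sh_C(ω)`
    (L : (ℕᵒᵖ ⥤ C) ⥤ (ℕᵒᵖ ⥤ C))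
    (h0 : ∀ X : ℕᵒᵖ ⥤ C, IsTerminal ((L.obj X).obj (op 0)))
    (h1 : ∀ (X : ℕᵒᵖ ⥤ C) (n : ℕ), (L.obj X).obj (op (n + 1)) = X.obj (op n))
    (hres : ∀ (X : ℕᵒᵖ ⥤ C) (n m : ℕ) (h : m ≤ n),
      (L.obj X).map (homOfLE (Nat.succ_le_succ h)).op =
        eqToHom (h1 X n) ≫ X.map (homOfLE h).op ≫ eqToHom (h1 X m).symm)
    (hmap : ∀ {X Y : ℕᵒᵖ ⥤ C} (f : X ⟶ Y) (n : ℕ),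
      (L.map f).app (op (n + 1)) =
        eqToHom (h1 X n) ≫ f.app (op n) ≫ eqToHom (h1 Y n).symm) :
    -- the pointwise extensions of `T` (with its monad structure) and of `F`
    letI E := (Functor.whiskeringRight ℕᵒᵖ C C).obj T.toFunctor
    letI FE := (Functor.whiskeringRight ℕᵒᵖ C C).obj F
    letI G := L ⋙ FE
    ∀ (η' : 𝟭 (ℕᵒᵖ ⥤ C) ⟶ E) (μ' : E ⋙ E ⟶ E),
      (∀ (X : ℕᵒᵖ ⥤ C) (b : ℕᵒᵖ), (η'.app X).app b = T.η.app (X.obj b)) →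
      (∀ (X : ℕᵒᵖ ⥤ C) (b : ℕᵒᵖ), (μ'.app X).app b = T.μ.app (X.obj b)) →
      ∃ Ξ : E ⋙ G ⟶ G ⋙ E,
        -- component at stage 1
        (∀ Y : ℕᵒᵖ ⥤ C,
          (Ξ.app Y).app (op 0) =
            F.map ((h0 Y).from ((L.obj (E.obj Y)).obj (op 0))) ≫
              T.η.app (F.obj ((L.obj Y).obj (op 0)))) ∧
        -- component at stage n+2
        (∀ (Y : ℕᵒᵖ ⥤ C) (n : ℕ),
          (Ξ.app Y).app (op (n + 1)) =
            eqToHom (congrArg F.obj (h1 (E.obj Y) n)) ≫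
              l.nat.app (Y.obj (op n)) ≫
                eqToHom (congrArg (fun c => T.obj (F.obj c)) (h1 Y n).symm)) ∧
        -- compatibility with the multiplication of `T^`
        (∀ Y : ℕᵒᵖ ⥤ C,
          G.map (μ'.app Y) ≫ Ξ.app Y =
            Ξ.app (E.obj Y) ≫ E.map (Ξ.app Y) ≫ μ'.app (G.obj Y)) ∧
        -- compatibility with the unit of `T^`
        (∀ Y : ℕᵒᵖ ⥤ C, G.map (η'.app Y) ≫ Ξ.app Y = η'.app (G.obj Y)) := by
  intro η' μ' hη hμ
  let hL : IsLaterFunctor L := ⟨h0, h1, hres, hmap⟩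
  refine ⟨l.laterLaw hL hsuit, fun _ => rfl, l.laterApp_succ hL, fun Y => ?_, fun Y => ?_⟩
  · have hμY : μ'.app Y = Functor.whiskerLeft Y T.μ := by ext b; exact hμ Y b
    ext ⟨n⟩
    rw [NatTrans.comp_app, NatTrans.comp_app, NatTrans.comp_app, hμ, hμY]
    exact l.laterApp_mu_compat hL Y n
  · have hηY : η'.app Y = Y.rightUnitor.inv ≫ Functor.whiskerLeft Y T.η := by
      ext b
      simp [hη]
    ext ⟨n⟩
    rw [NatTrans.comp_app, hη, hηY]
    exact l.laterApp_eta_compat hL Y n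
end

section
/- A monad (T,μ,η) on a category with a terminal object is affine (i.e., η_1 : 1 → T1 is an isomorphism) if and only if every distributive law λ : FT ⟶ TF of T over any endofunctor F satisfies the ω-suitability condition: T(F !_X) ∘ λ_X = η_{F1} ∘ F(!_{TX}) for all objects X. -/
open CategoryTheory CategoryTheory.Limits

universe v u

/-- A monad on a category with a terminal object is affine (its unit at the terminal
object is an isomorphism `1 ≅ T1`) if and only if every distributive law
`λ : FT ⟶ TF` of `T` over any endofunctor `F` is ω-suitable, i.e. satisfies
`T(F !_X) ∘ λ_X = η_{F1} ∘ F(!_{TX})` for all objects `X`. -/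
theorem affine_iff_all_distLaws_omega_suitable
    {C : Type u} [Category.{v} C] [HasTerminal C] (T : Monad C) :
    IsIso (T.η.app (⊤_ C)) ↔
      ∀ (F : C ⥤ C) (l : DistLaw T F) (X : C),
        l.nat.app X ≫ T.map (F.map (terminal.from X)) =
          F.map (terminal.from (T.obj X)) ≫ T.η.app (F.obj (⊤_ C)) := by
  constructor
  · intro hiso F l X
    have hret : terminal.from (T.obj (⊤_ C)) ≫ T.η.app (⊤_ C) = 𝟙 _ := by
      have : terminal.from (T.obj (⊤_ C)) = inv (T.η.app (⊤_ C)) :=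
        terminal.hom_ext _ _
      rw [this, IsIso.inv_hom_id]
    have htop : l.nat.app (⊤_ C) =
        F.map (terminal.from (T.obj (⊤_ C))) ≫ T.η.app (F.obj (⊤_ C)) := by
      calc l.nat.app (⊤_ C)
          = F.map (terminal.from (T.obj (⊤_ C)) ≫ T.η.app (⊤_ C)) ≫
              l.nat.app (⊤_ C) := by rw [hret, F.map_id, Category.id_comp]
        _ = F.map (terminal.from (T.obj (⊤_ C))) ≫
              (F.map (T.η.app (⊤_ C)) ≫ l.nat.app (⊤_ C)) := by
            rw [F.map_comp, Category.assoc]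
        _ = F.map (terminal.from (T.obj (⊤_ C))) ≫ T.η.app (F.obj (⊤_ C)) := by
            rw [l.eta_compat]
    have hnat := l.nat.naturality (terminal.from X)
    -- hnat : (T ⋙ F).map f ≫ nat.app ⊤ = nat.app X ≫ (F ⋙ T).map f
    calc l.nat.app X ≫ T.map (F.map (terminal.from X))
        = F.map (T.map (terminal.from X)) ≫ l.nat.app (⊤_ C) := hnat.symm
      _ = F.map (T.map (terminal.from X)) ≫
            F.map (terminal.from (T.obj (⊤_ C))) ≫ T.η.app (F.obj (⊤_ C)) := by
          rw [htop]
      _ = F.map (T.map (terminal.from X) ≫ terminal.from (T.obj (⊤_ C))) ≫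
            T.η.app (F.obj (⊤_ C)) := by rw [F.map_comp, Category.assoc]
      _ = F.map (terminal.from (T.obj X)) ≫ T.η.app (F.obj (⊤_ C)) := by
          congr 1
          exact congrArg F.map (terminal.hom_ext _ _)
  · intro h
    have h1 := h (𝟭 C)
      { nat := { app := fun X => 𝟙 (T.obj X), naturality := by intros; simp }
        mu_compat := by intros; simp
        eta_compat := by intros; simp } (⊤_ C)
    simp only [Functor.id_obj, Functor.id_map] at h1
    have hfrom : terminal.from (⊤_ C) = 𝟙 (⊤_ C) := terminal.hom_ext _ _
    rw [hfrom, T.map_id] at h1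
    refine ⟨terminal.from (T.obj (⊤_ C)), terminal.hom_ext _ _, ?_⟩
    calc terminal.from (T.obj (⊤_ C)) ≫ T.η.app (⊤_ C)
        = 𝟙 (T.obj (⊤_ C)) ≫ 𝟙 (T.obj (⊤_ C)) := h1.symm
      _ = 𝟙 _ := by simp
end

section
/- Let α be a limit ordinal and C a category with limits of β-sequences for β ≤ α. The identity morphism on the final-sequence sheaf fseq(F) ∈ Sh_C(α) (given by fseq(F)_β = F^β with the canonical connecting maps) is a coalgebra for the locally contractive endofunctor F^ ∘ ▶ on Sh_C(α), i.e., (F^ ▶ fseq(F))_β = fseq(F)_β at every stage β ≤ α, and it is the unique (up to isomorphism) F^∘▶-invariant: it is both an initial algebra and a final coalgebra for F^ ∘ ▶. -/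
open CategoryTheory CategoryTheory.Limits Opposite

universe w v u

variable {C : Type u} [Category.{v} C]

/-- The inclusion of the stages strictly below `γ`. -/
def stageIncl {α : Ordinal.{w}} (γ : Stage α) : {t : Stage α // t < γ} ⥤ Stage α :=
  Monotone.functor (f := fun t => t.1) fun _ _ h => h

/-- The canonical cone of a presheaf `X` at stage `γ` over the stages below `γ`. -/
def belowCone {α : Ordinal.{w}} (X : (Stage α)ᵒᵖ ⥤ C) (γ : Stage α) :
    Cone ((stageIncl γ).op ⋙ X) where
  pt := X.obj (op γ)
  π :=
    { app := fun t => X.map (homOfLE t.unop.2.le).op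
      naturality := fun t t' f => by
        dsimp
        erw [Category.id_comp, ← X.map_comp]
        exact congrArg X.map (Subsingleton.elim _ _) }

/-- The sheaf condition for a presheaf on the stages of `α`: at every stage that is
not a successor (i.e. `0` and limit stages) the value is the limit of the values at
the stages below. -/
def SheafCond {α : Ordinal.{w}} (X : (Stage α)ᵒᵖ ⥤ C) : Prop :=
  ∀ γ : Stage α, (¬ ∃ δ : Ordinal.{w}, γ.1 = δ + 1) → Nonempty (IsLimit (belowCone X γ))

/-- The category `Sh_C(α)` of `C`-valued sheaves on the Alexandrov topology of `α`. -/
abbrev Sh (α : Ordinal.{w}) (C : Type u) [Category.{v} C] :=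
  ObjectProperty.FullSubcategory (fun X : (Stage α)ᵒᵖ ⥤ C => SheafCond X)

/-- The underlying presheaf morphism of a morphism of sheaves. -/
def shHom {α : Ordinal.{w}} {A B : Sh α C} (f : A ⟶ B) : A.obj ⟶ B.obj := f.hom

/-!
Morphisms into a sheaf on the stages of `α` are built, and determined, by transfinite recursion:
at a successor stage the component is prescribed in terms of the previous one, and at a limit
stage it is forced by the sheaf condition. Since `G` at stage `γ + 1` only sees stage `γ`, for
every coalgebra `a : W ⟶ G W` and algebra `b : G B ⟶ B` the equation `f = a ≫ G f ≫ b` has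
exactly one solution. Taking `b`, resp. `a`, to be the inverse of an invariant shows that every
invariant is a final coalgebra and an initial algebra, so all invariants are isomorphic. Finally,
`S` is an invariant: `S` and `G S` agree at successor stages, hence everywhere.
-/

namespace Stage

variable {α : Ordinal.{w}}

-- Stages are written with these rather than anonymous constructors:
-- `(⟨γ + 1, hb⟩ : Stage α) ≤ t` elaborates with the `Subtype` order instance, and `homOfLE`
-- of such a proof does not match the morphisms of `Stage α` syntactically.
abbrev succ (γ : Ordinal.{w}) (hb : γ + 1 ≤ α) : Stage α := ⟨γ + 1, hb⟩

abbrev pred (γ : Ordinal.{w}) (hb : γ + 1 ≤ α) : Stage α := ⟨γ, le_trans le_self_add hb⟩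

theorem pred_lt_succ (γ : Ordinal.{w}) (hb : γ + 1 ≤ α) : pred γ hb < succ γ hb :=
  show γ < γ + 1 from Order.lt_add_one_iff.2 le_rfl

theorem pred_le_pred {δ γ : Ordinal.{w}} (hδ : δ + 1 ≤ α) (hγ : γ + 1 ≤ α)
    (h : δ ≤ γ) : pred δ hδ ≤ pred γ hγ :=
  h

theorem succ_le_succ {δ γ : Ordinal.{w}} (hδ : δ + 1 ≤ α) (hγ : γ + 1 ≤ α)
    (h : δ ≤ γ) : succ δ hδ ≤ succ γ hγ :=
  add_le_add_left h 1

theorem eq_of_le_of_not_lt {s t : Stage α} (h : s ≤ t) (h' : ¬ s < t) : s = t :=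
  Subtype.ext (le_antisymm h (not_lt.1 h'))

@[elab_as_elim]
theorem induction {P : Stage α → Prop}
    (succ : ∀ (γ : Ordinal.{w}) (hb : γ + 1 ≤ α), P (pred γ hb) → P (succ γ hb))
    (limit : ∀ t : Stage α, (¬ ∃ δ : Ordinal.{w}, t.1 = δ + 1) → (∀ s < t, P s) → P t)
    (t : Stage α) : P t := by
  obtain ⟨β, hβ⟩ := t
  induction β using WellFoundedLT.induction with
  | _ β ih =>
    by_cases hs : ∃ δ, β = δ + 1
    · obtain ⟨δ, rfl⟩ := hs
      exact succ δ hβ (ih δ (pred_lt_succ δ hβ) _)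
    · exact limit _ hs fun s hs => ih s.1 hs s.2

theorem map_comp (X : (Stage α)ᵒᵖ ⥤ C) {r s t : Stage α} (h₁ : r ≤ s) (h₂ : s ≤ t) :
    X.map (homOfLE h₂).op ≫ X.map (homOfLE h₁).op = X.map (homOfLE (h₁.trans h₂)).op := by
  rw [← X.map_comp]
  rfl

theorem map_refl (X : (Stage α)ᵒᵖ ⥤ C) (t : Stage α) :
    X.map (homOfLE (le_refl t)).op = 𝟙 _ :=
  X.map_id _

end Stage

theorem SheafCond.hom_ext {α : Ordinal.{w}} {X : (Stage α)ᵒᵖ ⥤ C} (hX : SheafCond X)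
    {t : Stage α} (ht : ¬ ∃ δ : Ordinal.{w}, t.1 = δ + 1) {Z : C} {f g : Z ⟶ X.obj (op t)}
    (h : ∀ s (hs : s < t), f ≫ X.map (homOfLE hs.le).op = g ≫ X.map (homOfLE hs.le).op) :
    f = g :=
  (hX t ht).some.hom_ext fun j => h j.unop.1 j.unop.2

theorem SheafCond.hom_ext_of_succ {α : Ordinal.{w}} {X : (Stage α)ᵒᵖ ⥤ C} (hX : SheafCond X)
    {t : Stage α} {Z : C} {f g : Z ⟶ X.obj (op t)}
    (h : ∀ (γ : Ordinal.{w}) (hb : γ + 1 ≤ α) (hγ : Stage.succ γ hb ≤ t),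
      f ≫ X.map (homOfLE hγ).op = g ≫ X.map (homOfLE hγ).op) :
    f = g := by
  by_cases ht : ∃ δ : Ordinal.{w}, t.1 = δ + 1
  · obtain ⟨δ, hδ⟩ := ht
    have hb : δ + 1 ≤ α := hδ ▸ t.2
    obtain rfl : t = Stage.succ δ hb := Subtype.ext hδ
    simpa only [Stage.map_refl, Category.comp_id] using h δ hb le_rfl
  · refine hX.hom_ext ht fun s hs => ?_
    have hst : s.1 + 1 ≤ t.1 := Order.add_one_le_iff.2 hs
    have hsα : s.1 + 1 ≤ α := hst.trans t.2
    have h₁ : s ≤ Stage.succ s.1 hsα := (Stage.pred_lt_succ s.1 hsα).le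
    have h₂ : Stage.succ s.1 hsα ≤ t := hst
    rw [← Stage.map_comp X h₁ h₂, reassoc_of% (h s.1 hsα h₂)]

namespace Stage

variable {α : Ordinal.{w}} {A B : (Stage α)ᵒᵖ ⥤ C}
  (Φ : ∀ (γ : Ordinal.{w}) (hb : γ + 1 ≤ α),
    (A.obj (op (pred γ hb)) ⟶ B.obj (op (pred γ hb))) →
      (A.obj (op (succ γ hb)) ⟶ B.obj (op (succ γ hb))))

/-- A solution up to stage `top` of the recursion `u_{γ+1} = Φ γ u_γ` for a natural
transformation `u : A ⟶ B`. -/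
structure Approx (top : Stage α) where
  app : ∀ t : Stage α, t ≤ top → (A.obj (op t) ⟶ B.obj (op t))
  naturality : ∀ (s t : Stage α) (h : s ≤ t) (ht : t ≤ top),
    app t ht ≫ B.map (homOfLE h).op = A.map (homOfLE h).op ≫ app s (h.trans ht)
  app_succ : ∀ (γ : Ordinal.{w}) (hb : γ + 1 ≤ α) (h : succ γ hb ≤ top),
    app (succ γ hb) h = Φ γ hb (app (pred γ hb) ((pred_lt_succ γ hb).le.trans h))

def StepNatural : Prop :=
  ∀ (δ γ : Ordinal.{w}) (hδ : δ + 1 ≤ α) (hγ : γ + 1 ≤ α) (h : δ ≤ γ)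
    (u : A.obj (op (pred γ hγ)) ⟶ B.obj (op (pred γ hγ)))
    (v : A.obj (op (pred δ hδ)) ⟶ B.obj (op (pred δ hδ))),
    u ≫ B.map (homOfLE (pred_le_pred hδ hγ h)).op =
        A.map (homOfLE (pred_le_pred hδ hγ h)).op ≫ v →
      Φ γ hγ u ≫ B.map (homOfLE (succ_le_succ hδ hγ h)).op =
        A.map (homOfLE (succ_le_succ hδ hγ h)).op ≫ Φ δ hδ v

variable {Φ}

namespace Approx

theorem app_eq (hB : SheafCond B) {t₁ t₂ : Stage α} (p₁ : Approx Φ t₁)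
    (p₂ : Approx Φ t₂) (s : Stage α) (h₁ : s ≤ t₁) (h₂ : s ≤ t₂) :
    p₁.app s h₁ = p₂.app s h₂ := by
  induction s using Stage.induction with
  | succ γ hb ih => rw [p₁.app_succ, p₂.app_succ, ih]
  | limit t ht ih =>
    exact hB.hom_ext ht fun s hs => by rw [p₁.naturality, p₂.naturality, ih s hs]

def restrict {s t : Stage α} (p : Approx Φ t) (h : s ≤ t) : Approx Φ s where
  app u hu := p.app u (hu.trans h)
  naturality u v huv _ := p.naturality u v huv _
  app_succ γ hb _ := p.app_succ γ hb _

-- The approximations below `t` need not be chosen compatibly: they agree by `app_eq`.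
noncomputable def glue (hB : SheafCond B) (t : Stage α) (q : ∀ s < t, Approx Φ s)
    (x : A.obj (op t) ⟶ B.obj (op t))
    (hx : ∀ s (hs : s < t),
      x ≫ B.map (homOfLE hs.le).op = A.map (homOfLE hs.le).op ≫ (q s hs).app s le_rfl)
    (hx_succ : ∀ (γ : Ordinal.{w}) (hb : γ + 1 ≤ α) (e : succ γ hb = t),
      eqToHom (by rw [e]) ≫ x ≫ eqToHom (by rw [e]) =
        Φ γ hb ((q _ (lt_of_lt_of_le (pred_lt_succ γ hb) e.le)).app _ le_rfl)) :
    Approx Φ t where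
  app s hs := if h : s < t then (q s h).app s le_rfl
    else eqToHom (by rw [eq_of_le_of_not_lt hs h]) ≫ x ≫
      eqToHom (by rw [eq_of_le_of_not_lt hs h])
  naturality s s' h hs' := by
    by_cases hlt' : s' < t
    · have hlt : s < t := lt_of_le_of_lt h hlt'
      simp only [dif_pos hlt', dif_pos hlt]
      rw [(q s' hlt').naturality s s' h le_rfl, app_eq hB (q s' hlt') (q s hlt)]
    · obtain rfl := eq_of_le_of_not_lt hs' hlt'
      by_cases hlt : s < s'
      · simp only [dif_neg hlt', dif_pos hlt, eqToHom_refl, Category.id_comp,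
          Category.comp_id]
        exact hx s hlt
      · obtain rfl := eq_of_le_of_not_lt h hlt
        simp
  app_succ γ hb h := by
    have hlt₀ : pred γ hb < t := lt_of_lt_of_le (pred_lt_succ γ hb) h
    split_ifs with hlt
    · rw [(q _ hlt).app_succ]
      exact congrArg _ (app_eq hB _ _ _ _ _)
    · exact hx_succ γ hb (eq_of_le_of_not_lt h hlt)

theorem step_naturality (hB : SheafCond B) (hΦ : StepNatural Φ) {γ : Ordinal.{w}}
    {hb : γ + 1 ≤ α} (p : Approx Φ (pred γ hb)) (s : Stage α) (hs : s ≤ pred γ hb) :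
    Φ γ hb (p.app _ le_rfl) ≫ B.map (homOfLE (hs.trans (pred_lt_succ γ hb).le)).op =
      A.map (homOfLE (hs.trans (pred_lt_succ γ hb).le)).op ≫ p.app s hs := by
  refine hB.hom_ext_of_succ fun ε hε hεs => ?_
  have hεγ : ε ≤ γ := (Order.add_one_le_iff.1 (show ε + 1 ≤ γ from hεs.trans hs)).le
  have hstep := hΦ ε γ hε hb hεγ _ _ (p.naturality (pred ε hε) _ hεγ le_rfl)
  rw [Category.assoc, Stage.map_comp, Category.assoc, p.naturality _ _ hεs hs,
    reassoc_of% (Stage.map_comp A hεs), p.app_succ]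
  exact hstep

noncomputable def cone (hB : SheafCond B) {t : Stage α} (q : ∀ s < t, Approx Φ s) :
    Cone ((stageIncl t).op ⋙ B) where
  pt := A.obj (op t)
  π :=
    { app := fun j => A.map (homOfLE j.unop.2.le).op ≫ (q j.unop.1 j.unop.2).app _ le_rfl
      naturality := fun j j' f => by
        have hle : j'.unop.1 ≤ j.unop.1 := leOfHom f.unop
        show 𝟙 _ ≫ A.map (homOfLE j'.unop.2.le).op ≫ (q _ j'.unop.2).app _ le_rfl =
          (A.map (homOfLE j.unop.2.le).op ≫ (q _ j.unop.2).app _ le_rfl) ≫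
            B.map (homOfLE hle).op
        rw [Category.id_comp, Category.assoc, (q _ j.unop.2).naturality _ _ hle le_rfl,
          reassoc_of% (Stage.map_comp A hle j.unop.2.le),
          app_eq hB (q _ j.unop.2) (q _ j'.unop.2)] }

end Approx

theorem nonempty_approx (hB : SheafCond B) (hΦ : StepNatural Φ) (t : Stage α) :
    Nonempty (Approx Φ t) := by
  induction t using Stage.induction with
  | succ γ hb ih =>
    obtain ⟨p⟩ := ih
    have hle : ∀ s < succ γ hb, s ≤ pred γ hb := fun s hs =>
      Order.lt_add_one_iff.1 (show s.1 < γ + 1 from hs)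
    refine ⟨Approx.glue hB _ (fun s hs => p.restrict (hle s hs)) (Φ γ hb (p.app _ le_rfl))
      (fun s hs => p.step_naturality hB hΦ s _) ?_⟩
    intro γ' hb' e
    obtain rfl : γ' = γ := Order.succ_injective (congrArg Subtype.val e)
    simp only [eqToHom_refl, Category.id_comp, Category.comp_id]
    rfl
  | limit t ht ih =>
    let q s hs : Approx Φ s := (ih s hs).some
    refine ⟨Approx.glue hB t q ((hB t ht).some.lift (Approx.cone hB q))
      (fun s hs => (hB t ht).some.fac (Approx.cone hB q) (op ⟨s, hs⟩)) ?_⟩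
    rintro γ hb rfl
    exact absurd ⟨γ, rfl⟩ ht

noncomputable def recHom (hB : SheafCond B) (hΦ : StepNatural Φ) : A ⟶ B where
  app t := (nonempty_approx hB hΦ ⟨α, le_rfl⟩).some.app t.unop t.unop.2
  naturality t t' f :=
    ((nonempty_approx hB hΦ _).some.naturality t'.unop t.unop (leOfHom f.unop) t.unop.2).symm

theorem recHom_app_succ (hB : SheafCond B) (hΦ : StepNatural Φ) (γ : Ordinal.{w})
    (hb : γ + 1 ≤ α) :
    (recHom hB hΦ).app (op (succ γ hb)) = Φ γ hb ((recHom hB hΦ).app (op (pred γ hb))) :=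
  Approx.app_succ _ γ hb hb

theorem natTrans_ext (hB : SheafCond B) {u v : A ⟶ B}
    (h : ∀ (γ : Ordinal.{w}) (hb : γ + 1 ≤ α),
      u.app (op (pred γ hb)) = v.app (op (pred γ hb)) →
        u.app (op (succ γ hb)) = v.app (op (succ γ hb))) :
    u = v := by
  ext ⟨t⟩
  induction t using Stage.induction with
  | succ γ hb ih => exact h γ hb ih
  | limit t ht ih =>
    exact hB.hom_ext ht fun s hs => by
      rw [← u.naturality, ← v.naturality]
      exact congrArg _ (ih s hs)

end Stage

open Stage

section Guarded

variable {α : Ordinal.{w}}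

/-- `P` agrees with `F^(▶ X)` at successor stages: `P_{γ+1} = F(X_γ)`, and the restrictions
between successor stages are the images under `F` of those of `X`. -/
structure IsGuardedImage (F : C ⥤ C) (X P : (Stage α)ᵒᵖ ⥤ C) : Prop where
  obj : ∀ (γ : Ordinal.{w}) (hb : γ + 1 ≤ α),
    P.obj (op (succ γ hb)) = F.obj (X.obj (op (pred γ hb)))
  map : ∀ (γ γ' : Ordinal.{w}) (hb : γ + 1 ≤ α) (hb' : γ' + 1 ≤ α) (h : γ ≤ γ'),
    HEq (P.map (homOfLE (succ_le_succ hb hb' h)).op)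
      (F.map (X.map (homOfLE (pred_le_pred hb hb' h)).op))

theorem IsGuardedImage.map_eq {F : C ⥤ C} {X P : (Stage α)ᵒᵖ ⥤ C}
    (hP : IsGuardedImage F X P)
    (γ γ' : Ordinal.{w}) (hb : γ + 1 ≤ α) (hb' : γ' + 1 ≤ α) (h : γ ≤ γ') :
    P.map (homOfLE (succ_le_succ hb hb' h)).op =
      eqToHom (hP.obj γ' hb') ≫
        F.map (X.map (homOfLE (pred_le_pred hb hb' h)).op) ≫
          eqToHom (hP.obj γ hb).symm :=
  (conj_eqToHom_iff_heq _ _ (hP.obj γ' hb') (hP.obj γ hb)).2 (hP.map γ γ' hb hb' h)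

theorem IsGuardedImage.exists_iso {F : C ⥤ C} {X P Q : (Stage α)ᵒᵖ ⥤ C}
    (hP : SheafCond P) (hQ : SheafCond Q) (hPX : IsGuardedImage F X P)
    (hQX : IsGuardedImage F X Q) :
    ∃ c : P ≅ Q, ∀ (γ : Ordinal.{w}) (hb : γ + 1 ≤ α),
      c.hom.app (op (succ γ hb)) = eqToHom ((hPX.obj γ hb).trans (hQX.obj γ hb).symm) := by
  have step : ∀ {P Q : (Stage α)ᵒᵖ ⥤ C} (hPX : IsGuardedImage F X P)
      (hQX : IsGuardedImage F X Q), StepNatural (A := P) (B := Q)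
        fun γ hb _ => eqToHom ((hPX.obj γ hb).trans (hQX.obj γ hb).symm) := by
    intro P Q hPX hQX δ γ hδ hγ h _ _ _
    rw [hPX.map_eq δ γ hδ hγ h, hQX.map_eq δ γ hδ hγ h]
    simp
  refine ⟨⟨recHom hQ (step hPX hQX), recHom hP (step hQX hPX), ?_, ?_⟩,
    recHom_app_succ hQ (step hPX hQX)⟩ <;>
  exact natTrans_ext ‹_› fun γ hb _ => by simp [recHom_app_succ]

/-- `G` acts as `F^ ∘ ▶` at successor stages, on objects and on morphisms. -/
structure IsGuardedExtension_s15 (F : C ⥤ C) (G : Sh α C ⥤ Sh α C) : Prop where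
  image : ∀ X : Sh α C, IsGuardedImage F X.obj (G.obj X).obj
  map : ∀ {X Y : Sh α C} (g : X ⟶ Y) (γ : Ordinal.{w}) (hb : γ + 1 ≤ α),
    HEq ((G.map g).hom.app (op (succ γ hb))) (F.map (g.hom.app (op (pred γ hb))))

namespace IsGuardedExtension_s15

variable {F : C ⥤ C} {G : Sh α C ⥤ Sh α C}

theorem map_app_succ (hG : IsGuardedExtension_s15 F G) {X Y : Sh α C} (g : X ⟶ Y)
    (γ : Ordinal.{w}) (hb : γ + 1 ≤ α) :
    (G.map g).hom.app (op (succ γ hb)) =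
      eqToHom ((hG.image X).obj γ hb) ≫ F.map (g.hom.app (op (pred γ hb))) ≫
        eqToHom ((hG.image Y).obj γ hb).symm :=
  (conj_eqToHom_iff_heq _ _ _ ((hG.image Y).obj γ hb)).2 (hG.map g γ hb)

-- The local contractiveness of `G`.
theorem map_app_succ_congr (hG : IsGuardedExtension_s15 F G) {X Y : Sh α C} {g g' : X ⟶ Y}
    {γ : Ordinal.{w}} {hb : γ + 1 ≤ α}
    (h : g.hom.app (op (pred γ hb)) = g'.hom.app (op (pred γ hb))) :
    (G.map g).hom.app (op (succ γ hb)) = (G.map g').hom.app (op (succ γ hb)) := by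
  rw [hG.map_app_succ, hG.map_app_succ, h]

theorem stepNatural_hylo (hG : IsGuardedExtension_s15 F G) {W B : Sh α C} (a : W ⟶ G.obj W)
    (b : G.obj B ⟶ B) :
    StepNatural (A := W.obj) (B := B.obj) fun γ hb u =>
      a.hom.app (op (succ γ hb)) ≫ eqToHom ((hG.image W).obj γ hb) ≫ F.map u ≫
        eqToHom ((hG.image B).obj γ hb).symm ≫ b.hom.app (op (succ γ hb)) := by
  intro δ γ hδ hγ h u v huv
  dsimp only
  simp only [Category.assoc]
  rw [← b.hom.naturality, (hG.image B).map_eq δ γ hδ hγ h, a.hom.naturality_assoc,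
    (hG.image W).map_eq δ γ hδ hγ h]
  simp only [Category.assoc, eqToHom_trans_assoc, eqToHom_refl, Category.id_comp]
  rw [← F.map_comp_assoc, huv, F.map_comp_assoc]

noncomputable def hylo (hG : IsGuardedExtension_s15 F G) {W B : Sh α C} (a : W ⟶ G.obj W)
    (b : G.obj B ⟶ B) : W ⟶ B :=
  ObjectProperty.homMk (recHom B.property (hG.stepNatural_hylo a b))

theorem hylo_eq (hG : IsGuardedExtension_s15 F G) {W B : Sh α C} (a : W ⟶ G.obj W)
    (b : G.obj B ⟶ B) :
    hG.hylo a b = a ≫ G.map (hG.hylo a b) ≫ b := by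
  refine ObjectProperty.hom_ext _ (natTrans_ext B.property fun γ hb _ => ?_)
  change (recHom B.property (hG.stepNatural_hylo a b)).app _ =
    a.hom.app _ ≫ (G.map (hG.hylo a b)).hom.app _ ≫ b.hom.app _
  rw [recHom_app_succ, hG.map_app_succ, Category.assoc, Category.assoc]
  rfl

theorem eq_hylo (hG : IsGuardedExtension_s15 F G) {W B : Sh α C} {a : W ⟶ G.obj W}
    {b : G.obj B ⟶ B} {f : W ⟶ B} (hf : f = a ≫ G.map f ≫ b) : f = hG.hylo a b := by
  refine ObjectProperty.hom_ext _ (natTrans_ext B.property fun γ hb h => ?_)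
  rw [hf, hG.hylo_eq a b]
  simp only [ObjectProperty.FullSubcategory.comp_hom, NatTrans.comp_app]
  rw [hG.map_app_succ_congr h]

noncomputable def isTerminalCoalgebra (hG : IsGuardedExtension_s15 F G) {A : Sh α C}
    (e : A ≅ G.obj A) :
    IsTerminal (⟨A, e.hom⟩ : Endofunctor.Coalgebra G) :=
  IsTerminal.ofUniqueHom
    (fun W => ⟨hG.hylo W.str e.inv, by
      rw [eq_comm, ← e.eq_comp_inv, Category.assoc]
      exact hG.hylo_eq _ _⟩)
    (fun _ m => Endofunctor.Coalgebra.Hom.ext <| hG.eq_hylo <| by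
      rw [← Category.assoc, e.eq_comp_inv]
      exact m.h.symm)

noncomputable def isInitialAlgebra (hG : IsGuardedExtension_s15 F G) {A : Sh α C}
    (e : A ≅ G.obj A) :
    IsInitial (⟨A, e.inv⟩ : Endofunctor.Algebra G) :=
  IsInitial.ofUniqueHom
    (fun V => ⟨hG.hylo e.hom V.str, by
      rw [eq_comm, e.inv_comp_eq]
      exact hG.hylo_eq _ _⟩)
    (fun _ m => Endofunctor.Algebra.Hom.ext <| hG.eq_hylo <| by
      rw [← e.inv_comp_eq]
      exact m.h.symm)

end IsGuardedExtension_s15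

end Guarded

/-- Let `α` be a limit ordinal and `C` a category with limits of `β`-sequences for
`β ≤ α`.  Let `S` be the final-sequence sheaf of an endofunctor `F` (with
`S_{γ+1} = F(S_γ)` and the canonical connecting maps) and let `G = F^ ∘ ▶` be the
guarded pointwise extension of `F` (with `(G X)_{γ+1} = F(X_γ)`, acting accordingly
on restrictions and morphisms).  Then the identity on `S` is a `G`-coalgebra — there
is an isomorphism `c : S ⟶ G S` whose components at successor stages are identities
(modulo the canonical identifications) — and it is the unique `G`-invariant up to
isomorphism: it is a final `G`-coalgebra, the corresponding algebra is an initial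
`G`-algebra, and every `G`-invariant is isomorphic to `S`. -/
theorem final_sequence_unique_guarded_invariant
    (α : Ordinal.{w})
    (F : C ⥤ C)
    -- the guarded pointwise extension `G = F^ ∘ ▶`
    (G : Sh α C ⥤ Sh α C)
    (hG_obj : ∀ (X : Sh α C) (γ : Ordinal.{w}) (hb : γ + 1 ≤ α),
      (G.obj X).obj.obj (op ⟨γ + 1, hb⟩) =
        F.obj (X.obj.obj (op ⟨γ, le_trans le_self_add hb⟩)))
    (hG_res : ∀ (X : Sh α C) (γ γ' : Ordinal.{w}) (hb : γ + 1 ≤ α)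
      (hb' : γ' + 1 ≤ α) (h : γ ≤ γ'),
      HEq ((G.obj X).obj.map
          (homOfLE (show (⟨γ + 1, hb⟩ : Stage α) ≤ ⟨γ' + 1, hb'⟩ by simpa using h)).op)
        (F.map (X.obj.map
          (homOfLE (show (⟨γ, le_trans le_self_add hb⟩ : Stage α) ≤
            ⟨γ', le_trans le_self_add hb'⟩ from h)).op)))
    (hG_map : ∀ {X Y : Sh α C} (g : X ⟶ Y) (γ : Ordinal.{w}) (hb : γ + 1 ≤ α),
      HEq ((shHom (G.map g)).app (op ⟨γ + 1, hb⟩))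
        (F.map ((shHom g).app (op ⟨γ, le_trans le_self_add hb⟩))))
    -- the final-sequence sheaf of `F`
    (S : Sh α C)
    (hS_obj : ∀ (γ : Ordinal.{w}) (hb : γ + 1 ≤ α),
      S.obj.obj (op ⟨γ + 1, hb⟩) =
        F.obj (S.obj.obj (op ⟨γ, le_trans le_self_add hb⟩)))
    (hS_res : ∀ (γ γ' : Ordinal.{w}) (hb : γ + 1 ≤ α) (hb' : γ' + 1 ≤ α)
      (h : γ ≤ γ'),
      HEq (S.obj.map
          (homOfLE (show (⟨γ + 1, hb⟩ : Stage α) ≤ ⟨γ' + 1, hb'⟩ by simpa using h)).op)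
        (F.map (S.obj.map
          (homOfLE (show (⟨γ, le_trans le_self_add hb⟩ : Stage α) ≤
            ⟨γ', le_trans le_self_add hb'⟩ from h)).op))) :
    ∃ c : S ⟶ G.obj S,
      (∀ (γ : Ordinal.{w}) (hb : γ + 1 ≤ α),
        HEq ((shHom c).app (op ⟨γ + 1, hb⟩))
          (𝟙 (F.obj (S.obj.obj (op ⟨γ, le_trans le_self_add hb⟩))))) ∧
      IsIso c ∧
      Nonempty (IsTerminal (⟨S, c⟩ : Endofunctor.Coalgebra G)) ∧
      (∀ (h : IsIso c), Nonempty (IsInitial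
        (⟨S, CategoryTheory.inv c⟩ : Endofunctor.Algebra G))) ∧
      (∀ (A : Sh α C), (A ≅ G.obj A) → Nonempty (A ≅ S)) := by
  have hG : IsGuardedExtension_s15 F G := ⟨fun X => ⟨hG_obj X, hG_res X⟩, hG_map⟩
  have hS : IsGuardedImage F S.obj S.obj := ⟨hS_obj, hS_res⟩
  obtain ⟨c, hc⟩ := hS.exists_iso S.property (G.obj S).property (hG.image S)
  let e : S ≅ G.obj S := ObjectProperty.isoMk _ c
  refine ⟨e.hom, fun γ hb => ?_, inferInstance, ⟨hG.isTerminalCoalgebra e⟩, fun _ => ?_,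
    fun A eA => ⟨(Endofunctor.Coalgebra.forget G).mapIso
      ((hG.isTerminalCoalgebra eA).uniqueUpToIso (hG.isTerminalCoalgebra e))⟩⟩
  · refine (conj_eqToHom_iff_heq _ _ (hS_obj γ hb) (hG_obj S γ hb)).1 ?_
    exact (hc γ hb).trans (by simp)
  · rw [IsIso.Iso.inv_hom]
    exact ⟨hG.isInitialAlgebra e⟩
end
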